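/- arXiv:2405.13291 — 2 statements merged into one kernel-verified Lean document; each statement's English description precedes it below -/
import Mathlib

section
/- For distinct i, j ∈ {1,…,n}, the linear span of the vectors {w_α : α ⊆ {1,…,n}, |α| = l+1, {i,j} ⊆ α} is exactly the (−1)-eigenspace of the transposition (i j) acting on W_{n,l}; this eigenspace has dimension C(n−2, l−1). -/
noncomputable section

open ExteriorAlgebra

/-- The sum-of-coordinates linear functional on `ℂ^n`. -/
def sumLin (n : ℕ) : (Fin n → ℂ) →ₗ[ℂ] ℂ where
  toFun x := ∑ i, x i
  map_add' x y := by simp [Finset.sum_add_distrib]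
  map_smul' c x := by simp [Finset.mul_sum]

/-- The standard representation `V_n = {x : ℂ^n | x_1 + ⋯ + x_n = 0}`. -/
def stdRep (n : ℕ) : Submodule ℂ (Fin n → ℂ) := LinearMap.ker (sumLin n)

/-- The exterior algebra of `ℂ^n`; the ambient home of `⋀^l ℂ^n`. -/
abbrev EA (n : ℕ) := ExteriorAlgebra ℂ (Fin n → ℂ)

/-- `W_{n,l} = ⋀^l V_n`, realized inside `⋀^l ℂ^n ⊆ ExteriorAlgebra ℂ ℂ^n`. -/
def Wsub (n l : ℕ) : Submodule ℂ (EA n) :=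
  (⋀[ℂ]^l ↥(stdRep n)).map (ExteriorAlgebra.map (stdRep n).subtype).toLinearMap

/-- The action of a permutation `σ ∈ 𝔖_n` on `⋀ ℂ^n`, induced by `(σ • x) i = x (σ⁻¹ i)`
(so that `σ • e_j = e_{σ j}`). -/
def permMap (n : ℕ) (σ : Equiv.Perm (Fin n)) : EA n →ₗ[ℂ] EA n :=
  (ExteriorAlgebra.map (LinearMap.funLeft ℂ ℂ ⇑σ⁻¹)).toLinearMap

/-- The standard basis vector `e_i` of `ℂ^n`. -/
def evec (n : ℕ) (i : Fin n) : Fin n → ℂ := Pi.single i 1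

/-- For an `(l+1)`-subset `α = {a_0 < a_1 < ⋯ < a_l}` of `{1,…,n}`,
the family of vectors `e_{a_i} − e_{a_0}`, `i = 1, …, l`. -/
def uvecs (n l : ℕ) (α : Finset (Fin n)) (hα : α.card = l + 1) : Fin l → (Fin n → ℂ) :=
  fun i => evec n ↑(α.orderIsoOfFin hα i.succ) - evec n ↑(α.orderIsoOfFin hα 0)

/-- The vector `w_α = (e_{a_1} − e_{a_0}) ∧ ⋯ ∧ (e_{a_l} − e_{a_0})`. -/
def wvec (n l : ℕ) (α : Finset (Fin n)) (hα : α.card = l + 1) : EA n :=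
  ιMulti ℂ l (uvecs n l α hα)

/-- The standard Hermitian inner product on `ℂ^n` against a fixed vector `u`
(linear in the first slot). -/
def stdInner (n : ℕ) (u : Fin n → ℂ) : (Fin n → ℂ) →ₗ[ℂ] ℂ where
  toFun x := ∑ k, x k * (starRingEnd ℂ) (u k)
  map_add' x y := by simp [add_mul, Finset.sum_add_distrib]
  map_smul' c x := by simp [Finset.mul_sum, mul_assoc]

/-- The linear map `x ↦ (⟨x, u_1⟩, …, ⟨x, u_l⟩)`. -/
def rowsMap (n l : ℕ) (u : Fin l → (Fin n → ℂ)) : (Fin n → ℂ) →ₗ[ℂ] (Fin l → ℂ) :=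
  LinearMap.pi fun j => stdInner n (u j)

/-- The alternating map `(v_1, …, v_l) ↦ det (⟨v_i, u_j⟩)_{ij}`. -/
def detPair (n l : ℕ) (u : Fin l → (Fin n → ℂ)) : (Fin n → ℂ) [⋀^Fin l]→ₗ[ℂ] ℂ :=
  (Matrix.detRowAlternating : (Fin l → ℂ) [⋀^Fin l]→ₗ[ℂ] ℂ).compLinearMap (rowsMap n l u)

/-- The linear functional `v ↦ ⟨v, u_1 ∧ ⋯ ∧ u_l⟩` on the exterior algebra: the Hermitian
inner product on `⋀^l ℂ^n` induced by the standard inner product, paired against a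
fixed pure wedge, extended by zero in other degrees. -/
def pairFun (n l : ℕ) (u : Fin l → (Fin n → ℂ)) : EA n →ₗ[ℂ] ℂ :=
  liftAlternating (fun i => if h : l = i then h ▸ detPair n l u else 0)

/-- The hyperplane `H_α = {v ∈ W_{n,l} : ⟨v, w_α⟩ = 0}`. -/
def Hplane (n l : ℕ) (α : Finset (Fin n)) (hα : α.card = l + 1) : Submodule ℂ (EA n) :=
  Wsub n l ⊓ LinearMap.ker (pairFun n l (uvecs n l α hα))
/-- The linear map `ℂ^n → ℂ^m` sending `e_i` to `e_{f i}`. -/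
def pushLin (n m : ℕ) (f : Fin n → Fin m) : (Fin n → ℂ) →ₗ[ℂ] (Fin m → ℂ) where
  toFun x := fun j => ∑ i ∈ Finset.univ.filter (fun i => f i = j), x i
  map_add' x y := by funext j; simp [Finset.sum_add_distrib]
  map_smul' c x := by funext j; simp [Finset.mul_sum]

/-- The induced map `f_* : ⋀ ℂ^n → ⋀ ℂ^m` (the exterior power of `e_i ↦ e_{f i}`). -/
def fstar (n m : ℕ) (f : Fin n → Fin m) : EA n →ₗ[ℂ] EA m :=
  (ExteriorAlgebra.map (pushLin n m f)).toLinearMap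

/-- The Young subgroup `𝔖_f ≤ 𝔖_n` of permutations preserving every fiber of `f`. -/
def youngSubgroup (n m : ℕ) (f : Fin n → Fin m) : Subgroup (Equiv.Perm (Fin n)) where
  carrier := {σ | ∀ i, f (σ i) = f i}
  one_mem' := fun _ => rfl
  mul_mem' := by
    intro a b ha hb i
    have h : (a * b) i = a (b i) := rfl
    rw [h, ha (b i), hb i]
  inv_mem' := by
    intro a ha i
    have h := ha (a⁻¹ i)
    rw [show a (a⁻¹ i) = i from a.apply_symm_apply i] at h
    exact h.symm

/-- The special flat `F_f`: the intersection (inside `W_{n,l}`) of the hyperplanes `H_α`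
over all `(l+1)`-subsets `α` with `|f(α)| ≤ l`. -/
def specialFlat (n m l : ℕ) (f : Fin n → Fin m) : Submodule ℂ (EA n) :=
  Wsub n l ⊓ ⨅ (α : Finset (Fin n)) (hα : α.card = l + 1) (_ : (α.image f).card ≤ l),
    Hplane n l α hα

/-- The fixed subspace `W_{n,l}^{𝔖_f} = {v ∈ W_{n,l} : σ·v = v for all σ ∈ 𝔖_f}`. -/
def fixedW (n m l : ℕ) (f : Fin n → Fin m) : Submodule ℂ (EA n) :=
  Wsub n l ⊓ ⨅ (σ : Equiv.Perm (Fin n)) (_ : σ ∈ youngSubgroup n m f),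
    LinearMap.ker (permMap n σ - LinearMap.id)

/-- The sections of `f : {1,…,n} → {1,…,m}`: maps `g` with `f ∘ g = id`. -/
abbrev sections (n m : ℕ) (f : Fin n → Fin m) := {g : Fin m → Fin n // f ∘ g = id}

/-- The averaging map `φ_f = (1/n_f) Σ_g g_*`, over all sections `g` of `f`. -/
def phiMap (n m : ℕ) (f : Fin n → Fin m) : EA m →ₗ[ℂ] EA n :=
  letI : Fintype (sections n m f) := Fintype.ofFinite _
  (Nat.card (sections n m f) : ℂ)⁻¹ •
    ∑ g : sections n m f, (ExteriorAlgebra.map (pushLin m n g.1)).toLinearMap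

/-- A flat of the intrinsic arrangement `A_n`: an intersection of a set of hyperplanes `H_α`
(inside the ambient space `W_{n,l}` of the arrangement). -/
def IsFlat (n l : ℕ) (U : Submodule ℂ (EA n)) : Prop :=
  ∃ S : Set {α : Finset (Fin n) // α.card = l + 1},
    U = Wsub n l ⊓ ⨅ a ∈ S, Hplane n l a.1 a.2

/-- The set of lines (one-dimensional flats) of the arrangement `A_n`. -/
def lines (n l : ℕ) : Set (Submodule ℂ (EA n)) :=
  {U | IsFlat n l U ∧ Module.finrank ℂ ↥U = 1}

/-- A flat is stable if it is contained in a special flat `F_f` for some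
surjection `f : {1,…,n} → {1,…,m}` with `m < n`. -/
def IsStable (n l : ℕ) (U : Submodule ℂ (EA n)) : Prop :=
  ∃ (m : ℕ) (f : Fin n → Fin m), Function.Surjective f ∧ m < n ∧ U ≤ specialFlat n m l f

/-- The Stirling number of the second kind `S(n,k)`: the number of partitions of
`{1,…,n}` into `k` nonempty blocks. -/
def stirling (n k : ℕ) : ℕ :=
  Nat.card {P : Finpartition (Finset.univ : Finset (Fin n)) // P.parts.card = k}

/-!
The transposition `(i j)` acts diagonally on the basis of `V_n` formed by `e_i - e_j`
(eigenvalue `-1`) and the `e_k - (e_i + e_j)/2`, `k ≠ i, j` (eigenvalue `1`). The wedges of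
`l` of these vectors are independent, lie in `W_{n,l} = ⋀^l V_n` and are `C(n-1, l)` in number,
which bounds `dim W_{n,l}`; so they form an eigenbasis of `W_{n,l}`, and the `(-1)`-eigenspace is
spanned by the `C(n-2, l-1)` wedges containing `e_i - e_j`. When `{i, j} ⊆ α`, both the factors
of `w_α` and the basis vectors indexed by `α \ {j}` span the differences `e_a - e_b`, `a, b ∈ α`,
so `w_α` is a nonzero multiple of the basis wedge indexed by `α \ {j}`.
-/

open Module Submodule

section General

variable {K E : Type*} [Field K] [AddCommGroup E] [Module K E]

theorem LinearIndependent.span_range_inf_eigenspace {ι : Type*} [Fintype ι] {b : ι → E}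
    (hb : LinearIndependent K b) {f : Module.End K E} {c : ι → K}
    (hf : ∀ s, f (b s) = c s • b s) (μ : K) :
    span K (Set.range b) ⊓ f.eigenspace μ = span K (b '' {s | c s = μ}) := by
  apply le_antisymm
  · rintro x ⟨hx, hfx⟩
    obtain ⟨a, rfl⟩ := (mem_span_range_iff_exists_fun K).mp hx
    rw [SetLike.mem_coe, Module.End.mem_eigenspace_iff] at hfx
    have hcoef : ∀ s, a s * (c s - μ) = 0 := by
      refine Fintype.linearIndependent_iff.mp hb _ ?_
      simp only [map_sum, map_smul, hf, Finset.smul_sum, smul_smul, mul_sub, sub_smul,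
        Finset.sum_sub_distrib] at hfx ⊢
      rw [hfx]
      simp only [mul_comm, sub_self]
    refine sum_mem fun s _ => ?_
    by_cases hs : c s = μ
    · exact smul_mem _ _ (subset_span ⟨s, hs, rfl⟩)
    · rw [(mul_eq_zero.mp (hcoef s)).resolve_right (sub_ne_zero.mpr hs), zero_smul]
      exact zero_mem _
  · rw [span_le]
    rintro _ ⟨s, hs, rfl⟩
    exact ⟨subset_span ⟨s, rfl⟩, Module.End.mem_eigenspace_iff.mpr (hs ▸ hf s)⟩

theorem LinearIndependent.finrank_span_image {ι : Type*} [Finite ι] {b : ι → E}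
    (hb : LinearIndependent K b) (p : Set ι) :
    finrank K (span K (b '' p)) = Nat.card p := by
  have := Fintype.ofFinite p
  rw [Set.image_eq_range, Nat.card_eq_fintype_card]
  exact finrank_span_eq_card (hb.comp _ Subtype.val_injective)

end General

section Exterior

variable {K E : Type*} [Field K] [AddCommGroup E] [Module K E]

theorem ExteriorAlgebra.linearIndependent_ιMulti_family {l : ℕ} {I : Type*} [LinearOrder I]
    {v : I → E} (hv : LinearIndependent K v) :
    LinearIndependent K (ιMulti_family K l v) := by
  rw [exteriorPower.ιMulti_family_eq_coe_comp]
  exact (exteriorPower.ιMulti_family_linearIndependent_field (n := l) hv).map' _ (ker_subtype _)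

theorem ExteriorAlgebra.map_ιMulti_family_of_apply_eq_smul {l : ℕ} {I : Type*} [LinearOrder I]
    {f : E →ₗ[K] E} {v : I → E} {c : I → K} (hf : ∀ k, f (v k) = c k • v k)
    (s : Set.powersetCard I l) :
    ExteriorAlgebra.map f (ιMulti_family K l v s) = (∏ k ∈ s.1, c k) • ιMulti_family K l v s := by
  rw [ιMulti_family, map_apply_ιMulti]
  simp only [Function.comp_def, hf]
  rw [AlternatingMap.map_smul_univ, Set.powersetCard.ofFinEmbEquiv_symm_apply]
  congr 1
  conv_rhs => rw [← Finset.map_orderEmbOfFin_univ s.1 s.2, Finset.prod_map]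
  rfl

theorem ExteriorAlgebra.ιMulti_mem_span_singleton {l : ℕ} {u v : Fin l → E}
    (h : ∀ t, v t ∈ span K (Set.range u)) :
    ιMulti K l v ∈ K ∙ ιMulti K l u := by
  by_cases hu : LinearIndependent K u
  · set S := span K (Set.range u)
    let e := Basis.span hu
    have hdet : (ιMulti K l).compLinearMap S.subtype = e.det.smulRight (ιMulti K l u) := by
      refine e.ext_alternating fun σ hσ => ?_
      let τ : Equiv.Perm (Fin l) := Equiv.ofBijective σ (Finite.injective_iff_bijective.1 hσ)
      change ιMulti K l (S.subtype ∘ e ∘ τ) = e.det (e ∘ τ) • ιMulti K l u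
      have hu' : S.subtype ∘ e = u := funext fun t => by simp [e, Basis.span_apply]
      rw [← Function.comp_assoc, hu', AlternatingMap.map_perm, AlternatingMap.map_perm,
        e.det_self, Units.smul_def, Units.smul_def, smul_assoc, one_smul]
    have hv : ιMulti K l v = (ιMulti K l).compLinearMap S.subtype (fun t => ⟨v t, h t⟩) := rfl
    rw [hv, hdet, AlternatingMap.smulRight_apply]
    exact smul_mem _ _ (mem_span_singleton_self _)
  · have hv : ¬ LinearIndependent K v := fun hv => hu <| by
      rw [linearIndependent_iff_card_eq_finrank_span] at hv ⊢
      have : FiniteDimensional K (span K (Set.range u)) :=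
        FiniteDimensional.span_of_finite K (Set.finite_range u)
      have hle : Set.finrank K (Set.range v) ≤ Set.finrank K (Set.range u) :=
        Submodule.finrank_mono (span_le.mpr (Set.range_subset_iff.mpr h))
      have hge : Set.finrank K (Set.range u) ≤ Fintype.card (Fin l) := by
        simpa using finrank_range_le_card (R := K) u
      omega
    rw [AlternatingMap.map_linearDependent _ _ hv]
    exact zero_mem _

end Exterior

theorem Set.powersetCard.card_subtype_mem {α : Type*} [Fintype α] [DecidableEq α] {l : ℕ}
    (a : α) (hl : 1 ≤ l) :
    Nat.card {s : Set.powersetCard α l // a ∈ s.1} = (Fintype.card α - 1).choose (l - 1) := by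
  classical
  rw [Nat.card_eq_fintype_card,
    Fintype.card_congr (Equiv.subtypeSubtypeEquivSubtypeInter _ (fun s => a ∈ s)),
    Fintype.card_subtype]
  have h := Finset.card_filter_powersetCard_subset {a} Finset.univ l (by simp) (by simpa using hl)
  simp only [Finset.card_singleton, Finset.card_univ, Finset.singleton_subset_iff] at h
  rw [← h]
  congr 1
  ext s
  simp [Set.powersetCard.mem_iff]

section SwapEigenbasis

variable {n : ℕ}

theorem sumLin_evec (b : Fin n) : sumLin n (evec n b) = 1 := by
  simp [sumLin, evec]

def swapEigenvector (i j : Fin n) (k : {k : Fin n // k ≠ j}) : Fin n → ℂ :=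
  if (k : Fin n) = i then evec n i - evec n j else evec n k - (2⁻¹ : ℂ) • (evec n i + evec n j)

theorem swapEigenvector_mem_stdRep (i j : Fin n) (k : {k : Fin n // k ≠ j}) :
    swapEigenvector i j k ∈ stdRep n := by
  change sumLin n _ = 0
  unfold swapEigenvector
  split_ifs <;> simp only [map_sub, map_smul, map_add, sumLin_evec] <;> norm_num

theorem funLeft_swap_swapEigenvector (i j : Fin n) (k : {k : Fin n // k ≠ j}) :
    LinearMap.funLeft ℂ ℂ ⇑(Equiv.swap i j)⁻¹ (swapEigenvector i j k)
      = (if (k : Fin n) = i then (-1 : ℂ) else 1) • swapEigenvector i j k := by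
  obtain ⟨k, hk⟩ := k
  ext x
  simp only [LinearMap.funLeft_apply, swapEigenvector, Equiv.swap_inv, evec]
  by_cases hx : x = i <;> by_cases hx' : x = j <;> split_ifs <;>
    simp_all [Pi.single_apply, Equiv.swap_apply_def]

theorem linearIndependent_swapEigenvector {i j : Fin n} (hij : i ≠ j) :
    LinearIndependent ℂ (swapEigenvector i j) := by
  classical
  let π (a : Fin n) : Module.Dual ℂ (Fin n → ℂ) := LinearMap.proj a
  refine LinearIndependent.of_pairwise_dual_eq_zero_one _
    (fun k => if (k : Fin n) = i then (2⁻¹ : ℂ) • (π i - π j) else π k) ?_ ?_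
  · rintro ⟨k, hk⟩ ⟨k', hk'⟩ hne
    simp only [ne_eq, Subtype.mk.injEq] at hne
    by_cases hki : k = i <;> by_cases hk'i : k' = i <;>
      simp_all [π, swapEigenvector, evec]
  · rintro ⟨k, hk⟩
    by_cases hki : k = i <;> simp_all [π, swapEigenvector, evec]
    norm_num

end SwapEigenbasis

section SwapWedge

variable {n : ℕ}

theorem ιMulti_mem_Wsub {l : ℕ} {v : Fin l → Fin n → ℂ} (hv : ∀ t, v t ∈ stdRep n) :
    ιMulti ℂ l v ∈ Wsub n l :=
  ⟨ιMulti ℂ l fun t => (⟨v t, hv t⟩ : stdRep n), ιMulti_range ℂ l (Set.mem_range_self _),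
    map_apply_ιMulti _ _⟩

theorem finrank_Wsub_le [NeZero n] (l : ℕ) : finrank ℂ (Wsub n l) ≤ (n - 1).choose l := by
  have hV : finrank ℂ (stdRep n) ≤ n - 1 := by
    have hne : stdRep n ≠ ⊤ := fun h => by
      have h0 : evec n 0 ∈ stdRep n := h ▸ mem_top
      simp [stdRep, sumLin_evec] at h0
    have := Submodule.finrank_lt hne
    rw [finrank_fin_fun] at this
    omega
  calc finrank ℂ (Wsub n l) ≤ finrank ℂ (⋀[ℂ]^l (stdRep n)) := finrank_map_le _ _
    _ = (finrank ℂ (stdRep n)).choose l := exteriorPower.finrank_eq ℂ l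
    _ ≤ (n - 1).choose l := Nat.choose_le_choose l hV

instance (n l : ℕ) : FiniteDimensional ℂ (Wsub n l) := by
  unfold Wsub
  infer_instance

def swapWedge (n l : ℕ) (i j : Fin n) : Set.powersetCard {k : Fin n // k ≠ j} l → EA n :=
  ιMulti_family ℂ l (swapEigenvector i j)

theorem linearIndependent_swapWedge {l : ℕ} {i j : Fin n} (hij : i ≠ j) :
    LinearIndependent ℂ (swapWedge n l i j) :=
  linearIndependent_ιMulti_family (linearIndependent_swapEigenvector hij)

theorem span_swapWedge_eq_Wsub {l : ℕ} {i j : Fin n} (hij : i ≠ j) :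
    span ℂ (Set.range (swapWedge n l i j)) = Wsub n l := by
  have : NeZero n := NeZero.of_pos i.pos
  refine eq_of_le_of_finrank_le ?_ ?_
  · rw [span_le, Set.range_subset_iff]
    exact fun s => ιMulti_mem_Wsub fun t => swapEigenvector_mem_stdRep i j _
  · rw [finrank_span_eq_card (linearIndependent_swapWedge hij), Fintype.card_eq_nat_card,
      Set.powersetCard.card, Nat.card_eq_fintype_card]
    simpa using finrank_Wsub_le l

theorem permMap_swap_swapWedge {l : ℕ} {i j : Fin n} (hij : i ≠ j)
    (s : Set.powersetCard {k : Fin n // k ≠ j} l) :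
    permMap n (Equiv.swap i j) (swapWedge n l i j s)
      = (if ⟨i, hij⟩ ∈ s.1 then (-1 : ℂ) else 1) • swapWedge n l i j s := by
  rw [permMap, AlgHom.toLinearMap_apply, swapWedge,
    map_ιMulti_family_of_apply_eq_smul (funLeft_swap_swapEigenvector i j),
    ← Finset.prod_ite_eq' s.1 ⟨i, hij⟩ fun _ => -1]
  congr 1
  exact Finset.prod_congr rfl fun k _ => by simp [Subtype.ext_iff]

theorem Wsub_inf_eigenspace_swap_eq_span_swapWedge {l : ℕ} {i j : Fin n} (hij : i ≠ j) :
    Wsub n l ⊓ Module.End.eigenspace (permMap n (Equiv.swap i j)) (-1)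
      = span ℂ (swapWedge n l i j '' {s | ⟨i, hij⟩ ∈ s.1}) := by
  rw [← span_swapWedge_eq_Wsub hij, (linearIndependent_swapWedge hij).span_range_inf_eigenspace
    (permMap_swap_swapWedge hij) (-1)]
  congr 2
  ext s
  by_cases h : ⟨i, hij⟩ ∈ s.1 <;> norm_num [h]

end SwapWedge

section Wvec

open Set

variable {n : ℕ}

theorem span_image2_sub_evec_le {α : Finset (Fin n)} {S : Submodule ℂ (Fin n → ℂ)}
    (c : Fin n → ℂ) (h : ∀ a ∈ α, evec n a - c ∈ S) :
    span ℂ (image2 (fun a b => evec n a - evec n b) α α) ≤ S := by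
  rw [span_le]
  rintro _ ⟨a, ha, b, hb, rfl⟩
  simpa using sub_mem (h a ha) (h b hb)

theorem span_range_uvecs {l : ℕ} (α : Finset (Fin n)) (hα : α.card = l + 1) :
    span ℂ (range (uvecs n l α hα)) = span ℂ (image2 (fun a b => evec n a - evec n b) α α) := by
  refine le_antisymm (span_mono (range_subset_iff.mpr fun t => ?_)) ?_
  · exact ⟨_, (α.orderIsoOfFin hα _).2, _, (α.orderIsoOfFin hα 0).2, rfl⟩
  · refine span_image2_sub_evec_le (evec n (α.orderIsoOfFin hα 0)) fun a ha => ?_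
    obtain ⟨r, hr⟩ := (α.orderIsoOfFin hα).surjective ⟨a, ha⟩
    cases r using Fin.cases with
    | zero => simp [hr]
    | succ r => exact subset_span ⟨r, by simp [uvecs, hr]⟩

theorem span_range_swapEigenvector_comp {l : ℕ} {i j : Fin n} (hij : i ≠ j)
    {α : Finset (Fin n)} (hi : i ∈ α) (hj : j ∈ α) (s : Set.powersetCard {k // k ≠ j} l)
    (hs : ∀ k : {k // k ≠ j}, k ∈ s.1 ↔ (k : Fin n) ∈ α) :
    span ℂ (range (swapEigenvector i j ∘ Set.powersetCard.ofFinEmbEquiv.symm s))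
      = span ℂ (image2 (fun a b => evec n a - evec n b) α α) := by
  refine le_antisymm (span_le.mpr (range_subset_iff.mpr fun t => ?_)) ?_
  · have hk : (Set.powersetCard.ofFinEmbEquiv.symm s t : Fin n) ∈ α :=
      (hs _).mp ((Set.powersetCard.mem_range_ofFinEmbEquiv_symm_iff_mem s _).mp ⟨t, rfl⟩)
    simp only [Function.comp_apply, swapEigenvector]
    split_ifs
    · exact subset_span ⟨i, hi, j, hj, rfl⟩
    · rw [show ∀ x y z : Fin n → ℂ, x - (2⁻¹ : ℂ) • (y + z) = (2⁻¹ : ℂ) • ((x - y) + (x - z))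
        from fun x y z => by module]
      exact smul_mem _ _ (add_mem (subset_span ⟨_, hk, i, hi, rfl⟩)
        (subset_span ⟨_, hk, j, hj, rfl⟩))
  · have hmem : ∀ k ∈ s.1, swapEigenvector i j k
        ∈ span ℂ (range (swapEigenvector i j ∘ Set.powersetCard.ofFinEmbEquiv.symm s)) := by
      intro k hk
      obtain ⟨t, rfl⟩ := (Set.powersetCard.mem_range_ofFinEmbEquiv_symm_iff_mem s k).mpr hk
      exact subset_span ⟨t, rfl⟩
    have hdiff := hmem ⟨i, hij⟩ ((hs _).mpr hi)
    rw [show swapEigenvector i j ⟨i, hij⟩ = evec n i - evec n j from if_pos rfl] at hdiff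
    refine span_image2_sub_evec_le ((2⁻¹ : ℂ) • (evec n i + evec n j)) fun a ha => ?_
    by_cases hai : a = i
    · subst hai
      convert smul_mem _ (2⁻¹ : ℂ) hdiff using 1
      module
    by_cases haj : a = j
    · subst haj
      convert smul_mem _ (-2⁻¹ : ℂ) hdiff using 1
      module
    simpa [swapEigenvector, hai] using hmem ⟨a, haj⟩ ((hs _).mpr ha)

theorem span_singleton_wvec_eq {l : ℕ} {i j : Fin n} (hij : i ≠ j)
    {α : Finset (Fin n)} (hα : α.card = l + 1) (hi : i ∈ α) (hj : j ∈ α)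
    (s : Set.powersetCard {k // k ≠ j} l) (hs : ∀ k : {k // k ≠ j}, k ∈ s.1 ↔ (k : Fin n) ∈ α) :
    ℂ ∙ wvec n l α hα = ℂ ∙ swapWedge n l i j s := by
  have hspan :=
    (span_range_uvecs α hα).trans (span_range_swapEigenvector_comp hij hi hj s hs).symm
  refine le_antisymm (span_singleton_le_iff_mem _ _ |>.mpr ?_)
    (span_singleton_le_iff_mem _ _ |>.mpr ?_)
  · exact ιMulti_mem_span_singleton fun t => hspan ▸ subset_span ⟨t, rfl⟩
  · exact ιMulti_mem_span_singleton fun t => hspan ▸ subset_span ⟨t, rfl⟩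

theorem span_wvec_eq_span_swapWedge {l : ℕ} {i j : Fin n} (hij : i ≠ j) :
    span ℂ {v : EA n | ∃ (α : Finset (Fin n)) (hα : α.card = l + 1),
        i ∈ α ∧ j ∈ α ∧ v = wvec n l α hα}
      = span ℂ (swapWedge n l i j '' {s | ⟨i, hij⟩ ∈ s.1}) := by
  refine le_antisymm (span_le.mpr ?_) (span_le.mpr ?_)
  · rintro _ ⟨α, hα, hi, hj, rfl⟩
    let s : Set.powersetCard {k // k ≠ j} l :=
      ⟨α.subtype (· ≠ j), by simp [Set.powersetCard.mem_iff, Finset.card_subtype,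
        Finset.filter_ne', Finset.card_erase_of_mem hj, hα]⟩
    have hs : ∀ k : {k // k ≠ j}, k ∈ s.1 ↔ (k : Fin n) ∈ α := fun k => Finset.mem_subtype
    rw [SetLike.mem_coe, ← span_singleton_le_iff_mem, span_singleton_wvec_eq hij hα hi hj s hs,
      span_singleton_le_iff_mem]
    exact subset_span ⟨s, (hs _).mpr hi, rfl⟩
  · rintro _ ⟨s, hsi, rfl⟩
    let α := insert j (s.1.map (Function.Embedding.subtype _))
    have hs : ∀ k : {k // k ≠ j}, k ∈ s.1 ↔ (k : Fin n) ∈ α := fun k => by simp [α, k.2]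
    have hα : α.card = l + 1 := by
      rw [Finset.card_insert_of_notMem (by simp), Finset.card_map, s.2]
    have hi : i ∈ α := (hs ⟨i, hij⟩).mp hsi
    rw [SetLike.mem_coe, ← span_singleton_le_iff_mem,
      ← span_singleton_wvec_eq hij hα hi (Finset.mem_insert_self j _) s hs,
      span_singleton_le_iff_mem]
    exact subset_span ⟨α, hα, hi, Finset.mem_insert_self j _, rfl⟩

end Wvec

theorem statement_6_general (n l : ℕ) (hl1 : 1 ≤ l)
    (i j : Fin n) (hij : i ≠ j) :
    Submodule.span ℂ
        {v : EA n | ∃ (α : Finset (Fin n)) (hα : α.card = l + 1),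
          i ∈ α ∧ j ∈ α ∧ v = wvec n l α hα}
      = Wsub n l ⊓ Module.End.eigenspace (permMap n (Equiv.swap i j)) (-1) ∧
    Module.finrank ℂ
        ↥(Wsub n l ⊓ Module.End.eigenspace (permMap n (Equiv.swap i j)) (-1))
      = Nat.choose (n - 2) (l - 1) := by
  rw [Wsub_inf_eigenspace_swap_eq_span_swapWedge hij]
  refine ⟨span_wvec_eq_span_swapWedge hij, ?_⟩
  rw [(linearIndependent_swapWedge hij).finrank_span_image]
  refine (Set.powersetCard.card_subtype_mem _ hl1).trans ?_
  simp [Nat.sub_sub]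

/-- The span of the `w_α` with `{i,j} ⊆ α` is exactly the `(−1)`-eigenspace of the
transposition `(i j)` acting on `W_{n,l}`, and this eigenspace has dimension `C(n−2, l−1)`. -/
theorem statement_6 (n l : ℕ) (hn : 1 ≤ n) (hl1 : 1 ≤ l) (hl2 : l ≤ n - 1)
    (i j : Fin n) (hij : i ≠ j) :
    Submodule.span ℂ
        {v : EA n | ∃ (α : Finset (Fin n)) (hα : α.card = l + 1),
          i ∈ α ∧ j ∈ α ∧ v = wvec n l α hα}
      = Wsub n l ⊓ Module.End.eigenspace (permMap n (Equiv.swap i j)) (-1) ∧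
    Module.finrank ℂ
        ↥(Wsub n l ⊓ Module.End.eigenspace (permMap n (Equiv.swap i j)) (-1))
      = Nat.choose (n - 2) (l - 1) :=
  statement_6_general n l hl1 i j hij
end
end

section
/- Let f: {1,…,n} → {1,…,m} be a surjection of sets with l+1 ≤ m ≤ n, let g and g' be two sections of f, and let α be an (l+1)-subset of {1,…,m}. Then H_{g(α)} ∩ F_f = H_{g'(α)} ∩ F_f, i.e., the intersection of a hyperplane of A_n indexed by the image of α under a section of f with the special flat F_f does not depend on the choice of section. -/
noncomputable section

open ExteriorAlgebra

/-! For a tuple `c` of `l + 1` indices let `Ψ_c(v) = ⟨v, (e_{c₁} - e_{c₀}) ∧ ⋯ ∧ (e_{c_l} - e_{c₀})⟩`,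
so that `H_T` is the kernel of `Ψ` of the increasing enumeration of `T`. On `v₁ ∧ ⋯ ∧ v_l`,
`Ψ_c` is the determinant of the matrix `(v_p(c_q))` bordered by a row of ones. Hence `Ψ_c` is
alternating in `c`, and expanding a matrix with two rows of ones gives
`∑ᵢ (-1)ⁱ Ψ_{C ∘ δᵢ} = 0` for every `(l + 2)`-tuple `C`.

For `v ∈ F_f`, `Ψ_c(v) = 0` as soon as `f ∘ c` is not injective. Taking `C = (x, c₀, …, c_l)` with
`f x = f c₀`, all faces but two vanish on `v`, so replacing `c₀` by `x` does not change `Ψ_c(v)`.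
Hence `Ψ_c(v)` depends only on `f ∘ c`, and `g ∘ a`, `g' ∘ a` have the same image under `f` for the
enumeration `a` of `α`.
-/

namespace Matrix

variable {R : Type*} [CommRing R] {l : ℕ}

theorem det_of_cons_one (A : Fin l → Fin (l + 1) → R) :
    det (of (Fin.cons 1 A)) = det (of fun p q => A p q.succ - A p 0) := by
  set B : Matrix (Fin (l + 1)) (Fin (l + 1)) R :=
    of (Fin.cons (Pi.single 0 1) fun p q => A p q - if q = 0 then 0 else A p 0) with hB
  have hcol : det (of (Fin.cons 1 A)) = det B := by
    rw [← det_transpose, ← det_transpose B]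
    refine det_eq_of_forall_row_eq_smul_add_const (fun q => if q = 0 then 0 else 1) 0 (by simp) ?_
    intro q p
    refine Fin.cases ?_ (fun p => ?_) p <;> by_cases hq : q = 0 <;> simp [hB, hq]
  rw [hcol, det_succ_row_zero, Fin.sum_univ_succ]
  simp [hB, Fin.succ_ne_zero, submatrix]

theorem sum_det_of_cons_one_comp_succAbove (A : Fin l → Fin (l + 2) → R) :
    ∑ i : Fin (l + 2), (-1) ^ (i : ℕ) * det (of (Fin.cons 1 fun p q => A p (i.succAbove q)))
      = 0 := by
  have hminor : ∀ i : Fin (l + 2), (of (Fin.cons 1 (Fin.cons 1 A))).submatrix Fin.succ i.succAbove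
      = of (Fin.cons 1 fun p q => A p (i.succAbove q)) := by
    intro i
    ext p q
    cases p using Fin.cases <;> simp
  have h := det_succ_row_zero (of (Fin.cons 1 (Fin.cons 1 A)))
  rw [det_zero_of_row_eq (i := 0) (j := 1) (by simp) rfl] at h
  simpa [hminor] using h.symm

end Matrix

theorem Finset.exists_perm_eq_orderIsoOfFin_comp {α : Type*} [LinearOrder α] {k : ℕ}
    (T : Finset α) (hT : T.card = k) {c : Fin k → α} (hc : Function.Injective c)
    (hcT : ∀ i, c i ∈ T) :
    ∃ σ : Equiv.Perm (Fin k), c = (fun i => (T.orderIsoOfFin hT i : α)) ∘ σ := by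
  let e : Fin k → Fin k := fun i => (T.orderIsoOfFin hT).symm ⟨c i, hcT i⟩
  have he : Function.Injective e := fun i j hij => hc <| by
    simpa [e] using congrArg (fun x => ((T.orderIsoOfFin hT x : T) : α)) hij
  refine ⟨Equiv.ofBijective e (Finite.injective_iff_bijective.mp he), funext fun i => ?_⟩
  exact (congrArg Subtype.val ((T.orderIsoOfFin hT).apply_symm_apply ⟨c i, hcT i⟩)).symm

theorem AlternatingMap.finsetSum_apply {R M N ι κ : Type*} [CommSemiring R] [AddCommMonoid M]
    [AddCommMonoid N] [Module R M] [Module R N] (s : Finset κ) (g : κ → M [⋀^ι]→ₗ[R] N)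
    (v : ι → M) : (∑ k ∈ s, g k) v = ∑ k ∈ s, g k v := by
  have := congrArg (fun F : MultilinearMap R _ N => F v)
    (map_sum (AlternatingMap.toMultilinearMapLM (S := R)) g s)
  rwa [sum_apply] at this

section Pairing

variable {n l : ℕ}

def degreePairing (n l : ℕ) : ((Fin n → ℂ) [⋀^Fin l]→ₗ[ℂ] ℂ) →ₗ[ℂ] EA n →ₗ[ℂ] ℂ :=
  liftAlternating ∘ₗ LinearMap.single ℂ (fun i => (Fin n → ℂ) [⋀^Fin i]→ₗ[ℂ] ℂ) l

theorem pairFun_eq_degreePairing (u : Fin l → Fin n → ℂ) :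
    pairFun n l u = degreePairing n l (detPair n l u) := by
  rw [pairFun, degreePairing, LinearMap.comp_apply]
  congr 1
  funext i
  by_cases h : l = i
  · subst h; simp
  · simp [h, Ne.symm h]

theorem stdInner_evec_sub (a b : Fin n) (x : Fin n → ℂ) :
    stdInner n (evec n a - evec n b) x = x a - x b := by
  simp [stdInner, evec, Pi.single_apply, mul_sub, Finset.sum_sub_distrib]

def simplexForm (c : Fin (l + 1) → Fin n) : (Fin n → ℂ) [⋀^Fin l]→ₗ[ℂ] ℂ :=
  detPair n l fun i => evec n (c i.succ) - evec n (c 0)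

theorem simplexForm_apply (c : Fin (l + 1) → Fin n) (v : Fin l → Fin n → ℂ) :
    simplexForm c v = Matrix.det (.of (Fin.cons 1 fun p q => v p (c q))) := by
  rw [Matrix.det_of_cons_one]
  show Matrix.det (.of fun p q => stdInner n (evec n (c q.succ) - evec n (c 0)) (v p)) = _
  simp only [stdInner_evec_sub]

theorem simplexForm_comp_perm (c : Fin (l + 1) → Fin n) (σ : Equiv.Perm (Fin (l + 1))) :
    simplexForm (c ∘ σ) = (Equiv.Perm.sign σ : ℂ) • simplexForm c := by
  ext v
  have hperm : Matrix.of (Fin.cons 1 fun p q => v p (c (σ q)))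
      = (Matrix.of (Fin.cons 1 fun p q => v p (c q))).submatrix id σ := by
    ext i j
    cases i using Fin.cases <;> simp
  simp only [AlternatingMap.smul_apply, simplexForm_apply, Function.comp_apply, hperm,
    Matrix.det_permute', smul_eq_mul]

theorem simplexForm_eq_zero_of_not_injective {c : Fin (l + 1) → Fin n}
    (hc : ¬Function.Injective c) : simplexForm c = 0 := by
  obtain ⟨i, j, hij, hne⟩ := Function.not_injective_iff.mp hc
  ext v
  rw [simplexForm_apply, AlternatingMap.zero_apply]
  refine Matrix.det_zero_of_column_eq hne fun p => ?_
  cases p using Fin.cases <;> simp [hij]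

theorem sum_simplexForm_comp_succAbove (C : Fin (l + 2) → Fin n) :
    ∑ i : Fin (l + 2), (-1 : ℂ) ^ (i : ℕ) • simplexForm (C ∘ i.succAbove) = 0 := by
  ext v
  simpa [AlternatingMap.finsetSum_apply, simplexForm_apply] using
    Matrix.sum_det_of_cons_one_comp_succAbove fun p q => v p (C q)

/-- `Ψ_c`: the pairing with `w_c`, for an arbitrary (not necessarily increasing or injective)
tuple `c`. -/
def simplexPairing (c : Fin (l + 1) → Fin n) : EA n →ₗ[ℂ] ℂ :=
  degreePairing n l (simplexForm c)

theorem pairFun_uvecs (T : Finset (Fin n)) (hT : T.card = l + 1) :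
    pairFun n l (uvecs n l T hT) = simplexPairing fun i => (T.orderIsoOfFin hT i : Fin n) :=
  pairFun_eq_degreePairing _

theorem simplexPairing_comp_perm (c : Fin (l + 1) → Fin n) (σ : Equiv.Perm (Fin (l + 1))) :
    simplexPairing (c ∘ σ) = (Equiv.Perm.sign σ : ℂ) • simplexPairing c := by
  rw [simplexPairing, simplexForm_comp_perm, map_smul, simplexPairing]

theorem simplexPairing_eq_zero_of_not_injective {c : Fin (l + 1) → Fin n}
    (hc : ¬Function.Injective c) : simplexPairing c = 0 := by
  rw [simplexPairing, simplexForm_eq_zero_of_not_injective hc, map_zero]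

theorem sum_simplexPairing_comp_succAbove_apply (C : Fin (l + 2) → Fin n) (v : EA n) :
    ∑ i : Fin (l + 2), (-1 : ℂ) ^ (i : ℕ) * simplexPairing (C ∘ i.succAbove) v = 0 := by
  have := congrArg (fun φ : EA n →ₗ[ℂ] ℂ => φ v) <|
    congrArg (degreePairing n l) (sum_simplexForm_comp_succAbove C)
  simpa [map_sum, simplexPairing] using this

theorem simplexPairing_apply_eq_zero_iff {c : Fin (l + 1) → Fin n} (hc : Function.Injective c)
    {T : Finset (Fin n)} (hT : T.card = l + 1) (hcT : ∀ i, c i ∈ T) (v : EA n) :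
    simplexPairing c v = 0 ↔ pairFun n l (uvecs n l T hT) v = 0 := by
  obtain ⟨σ, rfl⟩ := T.exists_perm_eq_orderIsoOfFin_comp hT hc hcT
  simp [simplexPairing_comp_perm, pairFun_uvecs]

end Pairing

section SpecialFlat

variable {n m l : ℕ} {f : Fin n → Fin m} {v : EA n}

theorem pairFun_uvecs_apply_eq_zero_of_mem_specialFlat (hv : v ∈ specialFlat n m l f)
    {T : Finset (Fin n)} (hT : T.card = l + 1) (hTf : (T.image f).card ≤ l) :
    pairFun n l (uvecs n l T hT) v = 0 := by
  simp only [specialFlat, Hplane, Submodule.mem_inf, Submodule.mem_iInf, LinearMap.mem_ker] at hv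
  exact (hv.2 T hT hTf).2

theorem simplexPairing_apply_eq_zero_of_mem_specialFlat (hv : v ∈ specialFlat n m l f)
    {c : Fin (l + 1) → Fin n} (hfc : ¬Function.Injective (f ∘ c)) : simplexPairing c v = 0 := by
  by_cases hc : Function.Injective c
  · classical
    have hT : (Finset.univ.image c).card = l + 1 := by
      rw [Finset.card_image_of_injective _ hc, Finset.card_fin]
    refine (simplexPairing_apply_eq_zero_iff hc hT (by simp) v).mpr ?_
    have hlt : (Finset.univ.image (f ∘ c)).card < (Finset.univ : Finset (Fin (l + 1))).card :=
      Finset.card_image_le.lt_of_ne fun h =>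
        hfc (by simpa using Finset.card_image_iff.mp h)
    refine pairFun_uvecs_apply_eq_zero_of_mem_specialFlat hv hT (Nat.le_of_lt_succ ?_)
    simpa [Finset.image_image] using hlt
  · rw [simplexPairing_eq_zero_of_not_injective hc, LinearMap.zero_apply]

theorem simplexPairing_update_zero_apply (hv : v ∈ specialFlat n m l f) (c : Fin (l + 1) → Fin n)
    {x : Fin n} (hx : f x = f (c 0)) :
    simplexPairing (Function.update c 0 x) v = simplexPairing c v := by
  have hrel := sum_simplexPairing_comp_succAbove_apply (Fin.cons x c) v
  have hface : (Fin.cons x c : Fin (l + 2) → Fin n) ∘ (1 : Fin (l + 2)).succAbove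
      = Function.update c 0 x := by
    funext j
    cases j using Fin.cases <;> simp [Fin.succ_ne_zero]
  have hrest : ∀ j : Fin l, simplexPairing ((Fin.cons x c : Fin (l + 2) → Fin n) ∘
      j.succ.succ.succAbove) v = 0 := by
    intro j
    have : NeZero l := ⟨j.pos.ne'⟩
    refine simplexPairing_apply_eq_zero_of_mem_specialFlat hv fun hinj => zero_ne_one (hinj ?_)
    simp only [Function.comp_apply, Fin.succ_succAbove_zero, Fin.succ_succAbove_one,
      Fin.cons_zero, Fin.cons_succ, hx]
  have hface0 : (Fin.cons x c : Fin (l + 2) → Fin n) ∘ (0 : Fin (l + 2)).succAbove = c :=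
    funext fun j => by simp
  simp only [Fin.sum_univ_succ, hrest, hface0, Fin.succ_zero_eq_one, hface, mul_zero,
    Finset.sum_const_zero, Fin.val_zero, Fin.val_one, pow_zero, pow_one] at hrel
  linear_combination -hrel

theorem simplexPairing_update_apply (hv : v ∈ specialFlat n m l f) (c : Fin (l + 1) → Fin n)
    (k : Fin (l + 1)) {x : Fin n} (hx : f x = f (c k)) :
    simplexPairing (Function.update c k x) v = simplexPairing c v := by
  let σ := Equiv.swap 0 k
  have hswap := simplexPairing_update_zero_apply hv (c ∘ σ) (x := x) (by simpa [σ] using hx)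
  rw [show (0 : Fin (l + 1)) = σ.symm k by simp [σ], ← Function.update_comp_equiv,
    simplexPairing_comp_perm, simplexPairing_comp_perm] at hswap
  simpa using hswap

theorem simplexPairing_apply_eq_of_comp_eq (hv : v ∈ specialFlat n m l f)
    {c c' : Fin (l + 1) → Fin n} (h : f ∘ c = f ∘ c') :
    simplexPairing c v = simplexPairing c' v := by
  classical
  suffices ∀ s : Finset (Fin (l + 1)), simplexPairing (s.piecewise c' c) v = simplexPairing c v by
    simpa using (this Finset.univ).symm
  intro s
  induction s using Finset.induction_on with
  | empty => simp
  | insert k s hks ih =>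
    rw [Finset.piecewise_insert, simplexPairing_update_apply hv _ _ _, ih]
    rw [Finset.piecewise_eq_of_notMem _ _ _ hks]
    exact (congrFun h k).symm

end SpecialFlat

theorem pairFun_uvecs_image_apply_eq_zero_iff {n m l : ℕ} {g : Fin m → Fin n}
    (hg : Function.Injective g) {α : Finset (Fin m)} (hα : α.card = l + 1)
    (hT : (α.image g).card = l + 1) (v : EA n) :
    pairFun n l (uvecs n l (α.image g) hT) v = 0 ↔
      simplexPairing (fun i => g (α.orderIsoOfFin hα i)) v = 0 :=
  (simplexPairing_apply_eq_zero_iff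
    (hg.comp (Subtype.val_injective.comp (α.orderIsoOfFin hα).injective)) hT
    (fun i => Finset.mem_image_of_mem g (α.orderIsoOfFin hα i).2) v).symm

theorem Hplane_image_inf_specialFlat_le {n m l : ℕ} {f : Fin n → Fin m} {g g' : Fin m → Fin n}
    (hg : f ∘ g = id) (hg' : f ∘ g' = id) {α : Finset (Fin m)} (hα : α.card = l + 1)
    (hT : (α.image g).card = l + 1) (hT' : (α.image g').card = l + 1) :
    Hplane n l (α.image g) hT ⊓ specialFlat n m l f
      ≤ Hplane n l (α.image g') hT' ⊓ specialFlat n m l f := by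
  intro v hmem
  obtain ⟨⟨hW, hker⟩, hv⟩ := hmem
  refine ⟨⟨hW, ?_⟩, hv⟩
  change pairFun n l _ v = 0
  change pairFun n l _ v = 0 at hker
  have hinj : ∀ {g : Fin m → Fin n}, f ∘ g = id → Function.Injective g :=
    fun hg => (show Function.LeftInverse f _ from congrFun hg).injective
  rw [pairFun_uvecs_image_apply_eq_zero_iff (hinj hg') hα]
  rw [pairFun_uvecs_image_apply_eq_zero_iff (hinj hg) hα] at hker
  have hfg : ∀ a, f (g a) = f (g' a) := fun a => (congrFun hg a).trans (congrFun hg' a).symm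
  rwa [← simplexPairing_apply_eq_of_comp_eq hv (funext fun i => hfg _)]

theorem statement_12_general (n m l : ℕ) (f : Fin n → Fin m)
    (g g' : Fin m → Fin n) (hg : f ∘ g = id) (hg' : f ∘ g' = id)
    (α : Finset (Fin m)) (hα : α.card = l + 1) :
    Hplane n l (α.image g)
        ((Finset.card_image_of_injective α
          (show Function.LeftInverse f g from fun x => congrFun hg x).injective).trans hα)
      ⊓ specialFlat n m l f
    = Hplane n l (α.image g')
        ((Finset.card_image_of_injective α
          (show Function.LeftInverse f g' from fun x => congrFun hg' x).injective).trans hα)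
      ⊓ specialFlat n m l f :=
  le_antisymm (Hplane_image_inf_specialFlat_le hg hg' hα _ _)
    (Hplane_image_inf_specialFlat_le hg' hg hα _ _)

/-- For a surjection `f` with `l+1 ≤ m ≤ n`, sections `g, g′` of `f`, and an `(l+1)`-subset
`α` of `{1,…,m}`: `H_{g(α)} ∩ F_f = H_{g′(α)} ∩ F_f`. -/
theorem statement_12 (n m l : ℕ) (hn : 1 ≤ n) (hl1 : 1 ≤ l) (hl2 : l ≤ n - 1)
    (hm : l + 1 ≤ m) (hmn : m ≤ n) (f : Fin n → Fin m) (hf : Function.Surjective f)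
    (g g' : Fin m → Fin n) (hg : f ∘ g = id) (hg' : f ∘ g' = id)
    (α : Finset (Fin m)) (hα : α.card = l + 1) :
    Hplane n l (α.image g)
        ((Finset.card_image_of_injective α
          (show Function.LeftInverse f g from fun x => congrFun hg x).injective).trans hα)
      ⊓ specialFlat n m l f
    = Hplane n l (α.image g')
        ((Finset.card_image_of_injective α
          (show Function.LeftInverse f g' from fun x => congrFun hg' x).injective).trans hα)
      ⊓ specialFlat n m l f :=
  statement_12_general n m l f g g' hg hg' α hα
end
end
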